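/- Let k be an infinite field, let D be a natural number, and let s₁, s₂, s₃ ∈ ℤ be such that the weight map α ↦ s₁α₁ + s₂α₂ + s₃α₃ is injective on the set of exponent vectors α ∈ (ℤ≥0)³ with α₁+α₂+α₃ ≤ D. For t ∈ kˣ let φ_t be the k-algebra automorphism of the polynomial ring k[x₁,x₂,x₃] determined by φ_t(x_i) = t^{s_i}·x_i (with t^{s_i} the integer power of the unit t). Let I ⊆ k[x₁,x₂,x₃] be an ideal that is generated by polynomials of total degree ≤ D and satisfies φ_t(I) ⊆ I for all t ∈ kˣ. Then I is a monomial ideal, i.e. I is generated by the monomials it contains. -/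

import Mathlib

/-!
Write `φ_t` for the scaling automorphism. For a polynomial `p = ∑ c_α x^α` one has
`φ_t p = ∑ t^{w(α)} c_α x^α`, where `w(α) = ∑ s_i α_i`. If `p ∈ I` has degree `≤ D`, the weights of
its monomials are pairwise distinct, so this is a "generalized Vandermonde" family in `t`:
comparing `φ_{t t₀} p` with `t₀^{w(α)} φ_t p` for a suitable `t₀` removes the monomial `x^α` and
rescales every other one by a nonzero constant, and induction on the number of monomials puts each
`c_α x^α` in `I`. Since the field is infinite, a suitable `t₀` exists: only finitely many units
are roots of unity of any given order. Applying this to the generators of `I` shows that `I` is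
spanned by monomials it contains.
-/

open MvPolynomial

instance GroupWithZero.infinite_units {G₀ : Type*} [GroupWithZero G₀] [Infinite G₀] :
    Infinite G₀ˣ :=
  have : Infinite {x : G₀ // x ≠ 0} :=
    (Set.finite_singleton (0 : G₀)).infinite_compl.to_subtype
  .of_injective _ unitsEquivNeZero.symm.injective

theorem Finset.prod_zpow_eq_zpow_sum {G ι : Type*} [CommGroup G] (s : Finset ι) (f : ι → ℤ)
    (a : G) : ∏ i ∈ s, a ^ f i = a ^ ∑ i ∈ s, f i :=
  (map_sum (zpowersHom G a).toAdditiveRight f s).symm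

theorem Units.finite_setOf_zpow_eq_one {R : Type*} [CommRing R] [IsDomain R] {n : ℤ}
    (hn : n ≠ 0) : {t : Rˣ | t ^ n = 1}.Finite := by
  have : NeZero n.natAbs := ⟨Int.natAbs_ne_zero.mpr hn⟩
  have : Finite (rootsOfUnity n.natAbs R) := inferInstance
  refine (Set.finite_coe_iff.mp this).subset fun t ht => ?_
  simpa [mem_rootsOfUnity, pow_natAbs_eq_one] using ht

theorem Units.exists_forall_zpow_ne_one {R : Type*} [CommRing R] [IsDomain R] [Infinite Rˣ]
    (S : Finset ℤ) (hS : 0 ∉ S) : ∃ t : Rˣ, ∀ n ∈ S, t ^ n ≠ 1 := by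
  have : (⋃ n ∈ S, {t : Rˣ | t ^ n = 1}).Finite :=
    S.finite_toSet.biUnion fun n hn => Units.finite_setOf_zpow_eq_one (ne_of_mem_of_not_mem hn hS)
  obtain ⟨t, ht⟩ := this.infinite_compl.nonempty
  exact ⟨t, fun n hn h => ht (Set.mem_biUnion hn h)⟩

theorem Submodule.mem_of_forall_sum_zpow_smul_mem {k V ι : Type*} [Field k] [Infinite k]
    [AddCommGroup V] [Module k V]
    (N : Submodule k V) {e : ι → ℤ} {W : Finset ι} (he : Set.InjOn e W) {v : ι → V}
    (h : ∀ t : kˣ, ∑ j ∈ W, ((t ^ e j : kˣ) : k) • v j ∈ N) : ∀ i ∈ W, v i ∈ N := by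
  classical
  induction W using Finset.induction_on generalizing v with
  | empty => simp
  | insert a W ha ih =>
    have hea : ∀ j ∈ W, e j - e a ≠ 0 := fun j hj hja =>
      ha (he (Finset.mem_insert_of_mem hj) (Finset.mem_insert_self a W) (sub_eq_zero.mp hja) ▸ hj)
    obtain ⟨t₀, ht₀⟩ := Units.exists_forall_zpow_ne_one (R := k) (W.image fun j => e j - e a)
      (by simpa using hea)
    -- Comparing the hypothesis at `t * t₀` with `t₀ ^ e a` times the one at `t` kills the
    -- `a`-term and rescales the `j`-term by `c j`.
    set c : ι → k := fun j => ((t₀ ^ e j : kˣ) : k) - ((t₀ ^ e a : kˣ) : k)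
    have hc : ∀ j ∈ W, c j ≠ 0 := fun j hj hcj =>
      ht₀ (e j - e a) (Finset.mem_image_of_mem _ hj) <| by
        rw [zpow_sub, mul_inv_eq_one]
        exact Units.val_injective (sub_eq_zero.mp hcj)
    have hW : ∀ j ∈ W, c j • v j ∈ N := ih (he.mono (by simp)) fun t => by
      have hsum : ∑ j ∈ W, ((t ^ e j : kˣ) : k) • c j • v j =
          ∑ j ∈ insert a W, (((t * t₀) ^ e j : kˣ) : k) • v j -
            ((t₀ ^ e a : kˣ) : k) • ∑ j ∈ insert a W, ((t ^ e j : kˣ) : k) • v j := by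
        rw [Finset.sum_insert ha, Finset.sum_insert ha, smul_add, Finset.smul_sum,
          add_sub_add_comm, ← Finset.sum_sub_distrib]
        simp only [c, mul_zpow, Units.val_mul, smul_smul, ← sub_smul]
        simp [mul_comm, mul_sub]
      rw [hsum]
      exact N.sub_mem (h _) (N.smul_mem _ (h t))
    have hrest : ∀ j ∈ W, v j ∈ N := fun j hj => (N.smul_mem_iff (hc j hj)).mp (hW j hj)
    intro i hi
    rcases Finset.mem_insert.mp hi with rfl | hi
    · have h1 := h 1
      simp only [one_zpow, Units.val_one, one_smul, Finset.sum_insert ha] at h1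
      simpa using N.sub_mem h1 (N.sum_mem hrest)
    · exact hrest i hi

namespace MvPolynomial

variable {σ : Type*}

section Scaling

variable {R : Type*} [CommRing R]

theorem aeval_C_zpow_mul_X_monomial (s : σ → ℤ) (t : Rˣ) (α : σ →₀ ℕ) (c : R) :
    aeval (fun i => C ((t ^ s i : Rˣ) : R) * X i) (monomial α c) =
      monomial α (((t ^ Finsupp.weight s α : Rˣ) : R) * c) := by
  have hprod : ∏ i ∈ α.support, ((t ^ s i : Rˣ) : R) ^ α i =
      ((t ^ Finsupp.weight s α : Rˣ) : R) := by
    rw [Finsupp.weight_apply, Finsupp.sum, ← Finset.prod_zpow_eq_zpow_sum, Units.coe_prod]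
    refine Finset.prod_congr rfl fun i _ => ?_
    simp [← Units.val_pow_eq_pow_val, ← zpow_natCast, ← zpow_mul, mul_comm]
  rw [aeval_monomial, Finsupp.prod]
  simp only [mul_pow, Finset.prod_mul_distrib, ← map_pow, ← map_prod, hprod]
  rw [monomial_eq, C_mul, algebraMap_eq, Finsupp.prod]
  ring

theorem aeval_C_zpow_mul_X_eq_sum (s : σ → ℤ) (t : Rˣ) (p : MvPolynomial σ R) :
    aeval (fun i => C ((t ^ s i : Rˣ) : R) * X i) p =
      ∑ α ∈ p.support, ((t ^ Finsupp.weight s α : Rˣ) : R) • monomial α (coeff α p) := by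
  conv_lhs => rw [p.as_sum]
  simp only [map_sum, aeval_C_zpow_mul_X_monomial, smul_monomial, smul_eq_mul]

end Scaling

theorem monomial_one_mem_of_mem_of_injOn_weight {k : Type*} [Field k] [Infinite k]
    {s : σ → ℤ} {I : Ideal (MvPolynomial σ k)}
    (hI : ∀ t : kˣ, ∀ p ∈ I, aeval (fun i => C ((t ^ s i : kˣ) : k) * X i) p ∈ I)
    {p : MvPolynomial σ k} (hp : p ∈ I)
    (hs : Set.InjOn (Finsupp.weight s) (p.support : Set (σ →₀ ℕ)))
    {α : σ →₀ ℕ} (hα : α ∈ p.support) : monomial α 1 ∈ I := by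
  have hmon : monomial α (coeff α p) ∈ I :=
    (I.restrictScalars k).mem_of_forall_sum_zpow_smul_mem hs
      (v := fun α => monomial α (coeff α p))
      (fun t => by
        rw [Submodule.restrictScalars_mem, ← aeval_C_zpow_mul_X_eq_sum]
        exact hI t p hp)
      α hα
  have := I.mul_mem_left (C (coeff α p)⁻¹) hmon
  rwa [C_mul_monomial, inv_mul_cancel₀ (mem_support_iff.mp hα)] at this

theorem ideal_eq_span_monomials_of_eq_span {R : Type*} [CommSemiring R]
    {I : Ideal (MvPolynomial σ R)} {G : Set (MvPolynomial σ R)} (hIG : I = Ideal.span G)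
    (hG : ∀ g ∈ G, ∀ α ∈ g.support, monomial α 1 ∈ I) :
    I = Ideal.span {p | p ∈ I ∧ ∃ α, p = monomial α 1} := by
  have hM : {p | p ∈ I ∧ ∃ α, p = monomial α (1 : R)} =
      (fun α => monomial α 1) '' {α | monomial α 1 ∈ I} := by
    ext p
    constructor
    · rintro ⟨hp, α, rfl⟩
      exact ⟨α, hp, rfl⟩
    · rintro ⟨α, hα, rfl⟩
      exact ⟨hα, α, rfl⟩
  refine le_antisymm ?_ (Ideal.span_le.mpr fun p hp => hp.1)
  nth_rewrite 1 [hIG]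
  refine Ideal.span_le.mpr fun g hg => ?_
  rw [SetLike.mem_coe, hM, mem_ideal_span_monomial_image]
  exact fun α hα => ⟨α, hG g hg α hα, le_rfl⟩

theorem injOn_weight_support_of_totalDegree_le {R : Type*} [CommSemiring R] [Fintype σ]
    {s : σ → ℤ} {D : ℕ}
    (hs : Set.InjOn (fun α : σ → ℕ => ∑ i, s i * (α i : ℤ)) {α | ∑ i, α i ≤ D})
    {p : MvPolynomial σ R} (hp : p.totalDegree ≤ D) :
    Set.InjOn (Finsupp.weight s) (p.support : Set (σ →₀ ℕ)) := by
  have hdeg : ∀ α ∈ p.support, ∑ i, α i ≤ D := fun α hα => by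
    rw [← Finsupp.degree_eq_sum]
    exact (le_totalDegree hα).trans hp
  intro α hα β hβ h
  refine DFunLike.coe_injective (hs (hdeg α hα) (hdeg β hβ) ?_)
  simpa [Finsupp.weight_eq_sum, mul_comm] using h

end MvPolynomial

/-- over an infinite field `k`, if the weight map
`α ↦ s₁α₁+s₂α₂+s₃α₃` is injective on exponent vectors of total degree `≤ D`, then any
ideal `I ⊆ k[x₁,x₂,x₃]` generated in degrees `≤ D` and stable under all the scaling
automorphisms `φ_t : x_i ↦ t^{s_i}·x_i` (`t ∈ kˣ`) is a monomial ideal, i.e. `I` is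
generated by the monomials it contains. -/
theorem torus_stable_ideal_is_monomial
    (k : Type*) [Field k] [Infinite k] (D : ℕ) (s : Fin 3 → ℤ)
    (hinj : Set.InjOn (fun α : Fin 3 → ℕ => ∑ i, s i * (α i : ℤ))
      {α : Fin 3 → ℕ | ∑ i, α i ≤ D})
    (I : Ideal (MvPolynomial (Fin 3) k))
    (hgen : ∃ G : Set (MvPolynomial (Fin 3) k),
      (∀ g ∈ G, g.totalDegree ≤ D) ∧ I = Ideal.span G)
    (hstab : ∀ t : kˣ, ∀ p ∈ I,
      MvPolynomial.aeval
        (fun i => MvPolynomial.C (((t ^ (s i) : kˣ) : k)) * MvPolynomial.X i) p ∈ I) :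
    I = Ideal.span
      {p : MvPolynomial (Fin 3) k | p ∈ I ∧ ∃ α : Fin 3 →₀ ℕ,
        p = MvPolynomial.monomial α 1} := by
  obtain ⟨G, hGdeg, hIG⟩ := hgen
  refine ideal_eq_span_monomials_of_eq_span hIG fun g hg α hα => ?_
  have hgI : g ∈ I := hIG ▸ Ideal.subset_span hg
  exact monomial_one_mem_of_mem_of_injOn_weight hstab hgI
    (injOn_weight_support_of_totalDegree_le hinj (hGdeg g hg)) hα
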